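/- For any finite S, T ⊆ L, there exists σ ⊆ {1,…,n} with |σ| ≤ ⌊n/2⌋ such that: if T is σ-saturated on S, then T is {1,…,n}-saturated on S. (Here assume no coordinate vanishes identically on L.) -/
import Mathlib


open scoped Classical

noncomputable section

variable {ι : Type*} [Fintype ι]

/-- `x ∈ ℕ^n`, i.e. all coordinates nonnegative. -/
def Nonneg (x : ι → ℤ) : Prop := ∀ i, 0 ≤ x i

/-- componentwise positive part `u⁺`. -/
def vposPart (x : ι → ℤ) : ι → ℤ := fun i => max (x i) 0

/-- componentwise negative part `u⁻`. -/
def vnegPart (x : ι → ℤ) : ι → ℤ := fun i => max (-x i) 0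

/-- support of a vector. -/
def suppV (x : ι → ℤ) : Set ι := {i | x i ≠ 0}

/-- membership in the fiber `F_{L,b} = {x ∈ ℕ^n : x ≡ b (mod L)}`. -/
def inFiber (L : AddSubgroup (ι → ℤ)) (b x : ι → ℤ) : Prop :=
  Nonneg x ∧ x - b ∈ L

/-- adjacency in the fiber graph: `x` and `y` differ by an element of `±S`. -/
def adjS (S : Set (ι → ℤ)) (x y : ι → ℤ) : Prop := x - y ∈ S ∨ y - x ∈ S

/-- `p 0, p 1, …, p k` is a path in the fiber graph `G(F_{L,b}, S)`. -/
def IsPathIn (L : AddSubgroup (ι → ℤ)) (S : Set (ι → ℤ)) (b : ι → ℤ)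
    (k : ℕ) (p : ℕ → ι → ℤ) : Prop :=
  (∀ i ≤ k, inFiber L b (p i)) ∧ ∀ i < k, adjS S (p i) (p (i+1))

/-- `x` and `y` are connected in the fiber graph `G(F_{L,b}, S)`. -/
def ConnIn (L : AddSubgroup (ι → ℤ)) (S : Set (ι → ℤ)) (b x y : ι → ℤ) : Prop :=
  ∃ k p, IsPathIn L S b k p ∧ p 0 = x ∧ p k = y

/-- `S` is a generating set of the lattice `L`: all fiber graphs are connected. -/
def IsGenSet (L : AddSubgroup (ι → ℤ)) (S : Set (ι → ℤ)) : Prop :=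
  ∀ b x y, inFiber L b x → inFiber L b y → ConnIn L S b x y

/-- `succ` (written `≻`) is a term ordering for `L`: an additive total
well-ordering on every fiber. -/
structure IsTermOrder (L : AddSubgroup (ι → ℤ))
    (succ : (ι → ℤ) → (ι → ℤ) → Prop) : Prop where
  trans : ∀ {x y z}, succ x y → succ y z → succ x z
  irrefl : ∀ x, ¬ succ x x
  total : ∀ b x y, inFiber L b x → inFiber L b y → x ≠ y → succ x y ∨ succ y x
  additive : ∀ x y γ, Nonneg γ → succ x y → succ (x + γ) (y + γ)
  wf : ∀ b, WellFounded (fun x y : ι → ℤ => inFiber L b x ∧ inFiber L b y ∧ succ y x)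

/-- `L_≻ = {u ∈ L : u⁺ ≻ u⁻}`. -/
def Lpos (L : AddSubgroup (ι → ℤ)) (succ : (ι → ℤ) → (ι → ℤ) → Prop) :
    Set (ι → ℤ) :=
  {u | u ∈ L ∧ succ (vposPart u) (vnegPart u)}

/-- `m` is the `≻`-minimal element of the fiber `F_{L,b}`. -/
def IsMinimalFiber (L : AddSubgroup (ι → ℤ)) (b : ι → ℤ)
    (succ : (ι → ℤ) → (ι → ℤ) → Prop) (m : ι → ℤ) : Prop :=
  inFiber L b m ∧ ∀ y, inFiber L b y → y ≠ m → succ y m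

/-- `G` is a `≻`-Gröbner basis of `L`: from every `x ∈ ℕ^n` there is a
`≻`-decreasing path in `G(F_{L,x},G)` to the `≻`-minimal element of `F_{L,x}`. -/
def IsGroebner (L : AddSubgroup (ι → ℤ)) (succ : (ι → ℤ) → (ι → ℤ) → Prop)
    (G : Set (ι → ℤ)) : Prop :=
  ∀ x, Nonneg x → ∃ m, IsMinimalFiber L x succ m ∧
    ∃ k p, IsPathIn L G x k p ∧ p 0 = x ∧ p k = m ∧ ∀ i < k, succ (p i) (p (i+1))

/-- there is a `≻`-reduction path from `x` to `y` in `G(F_{L,b},G)`: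
no intermediate node is `≻` than both endpoints. -/
def IsRedPath (L : AddSubgroup (ι → ℤ)) (G : Set (ι → ℤ)) (b : ι → ℤ)
    (succ : (ι → ℤ) → (ι → ℤ) → Prop) (x y : ι → ℤ) : Prop :=
  ∃ k p, IsPathIn L G b k p ∧ p 0 = x ∧ p k = y ∧
    ∀ i, 0 < i → i < k → ¬ (succ (p i) x ∧ succ (p i) y)

/-- `(x,z,y)` is a `≻`-critical path in `G(F_{L,b},G)`. -/
def IsCriticalIn (L : AddSubgroup (ι → ℤ)) (G : Set (ι → ℤ)) (b : ι → ℤ)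
    (succ : (ι → ℤ) → (ι → ℤ) → Prop) (x z y : ι → ℤ) : Prop :=
  inFiber L b x ∧ inFiber L b z ∧ inFiber L b y ∧
  adjS G x z ∧ adjS G z y ∧ succ z x ∧ succ z y

/-- `z^(u,v) := max{u⁺, v⁺}` componentwise. -/
def zOf (u v : ι → ℤ) : ι → ℤ := fun i => max (vposPart u i) (vposPart v i)

/-- `x^(u,v) := z^(u,v) − u`. -/
def xOf (u v : ι → ℤ) : ι → ℤ := zOf u v - u

/-- `y^(u,v) := z^(u,v) − v`. -/
def yOf (u v : ι → ℤ) : ι → ℤ := zOf u v - v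

/-- `(x,z,y)` is a `≻`-critical path for the pair `(u,v)`. -/
def IsCriticalFor (succ : (ι → ℤ) → (ι → ℤ) → Prop) (u v x z y : ι → ℤ) : Prop :=
  Nonneg x ∧ Nonneg z ∧ Nonneg y ∧ z - x = u ∧ z - y = v ∧ succ z x ∧ succ z y

/-- rational inner product `φ·x`. -/
def qdot (φ : ι → ℚ) (x : ι → ℤ) : ℚ := ∑ i, φ i * (x i : ℚ)

/-- there is a `φ`-reduction path from `x` to `y` in `G(F_{L,b},G)`. -/
def IsPhiRedPath (L : AddSubgroup (ι → ℤ)) (G : Set (ι → ℤ)) (b : ι → ℤ)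
    (φ : ι → ℚ) (x y : ι → ℤ) : Prop :=
  ∃ k p, IsPathIn L G b k p ∧ p 0 = x ∧ p k = y ∧
    ∀ i, 0 < i → i < k → ¬ (qdot φ x < qdot φ (p i) ∧ qdot φ y < qdot φ (p i))

/-- `G` is a `φ`-Gröbner basis of `L`. -/
def IsPhiGroebner (L : AddSubgroup (ι → ℤ)) (φ : ι → ℚ) (G : Set (ι → ℤ)) : Prop :=
  ∀ b x y, inFiber L b x → inFiber L b y → IsPhiRedPath L G b φ x y

/-- `x ∧_σ y`: componentwise min on `σ`, zero elsewhere. -/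
def meetOn (σ : Set ι) (x y : ι → ℤ) : ι → ℤ :=
  fun i => if i ∈ σ then min (x i) (y i) else 0

/-- `T` is `σ`-saturated on `S`. -/
def IsSaturatedOn (L : AddSubgroup (ι → ℤ)) (σ : Set ι) (S T : Set (ι → ℤ)) : Prop :=
  ∀ b x y, inFiber L b x → inFiber L b y → ConnIn L S b x y →
    ConnIn L T (b - meetOn σ x y) (x - meetOn σ x y) (y - meetOn σ x y)

/-- membership in `F^σ_{L,b}`: nonnegative outside `σ`. -/
def inFiberFree (L : AddSubgroup (ι → ℤ)) (σ : Set ι) (b x : ι → ℤ) : Prop :=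
  (∀ i, i ∉ σ → 0 ≤ x i) ∧ x - b ∈ L

/-- path in the graph `G(F^σ_{L,b}, S)`. -/
def IsPathFree (L : AddSubgroup (ι → ℤ)) (σ : Set ι) (S : Set (ι → ℤ)) (b : ι → ℤ)
    (k : ℕ) (p : ℕ → ι → ℤ) : Prop :=
  (∀ i ≤ k, inFiberFree L σ b (p i)) ∧ ∀ i < k, adjS S (p i) (p (i+1))

/-- connectivity in `G(F^σ_{L,b}, S)`. -/
def ConnFree (L : AddSubgroup (ι → ℤ)) (σ : Set ι) (S : Set (ι → ℤ))
    (b x y : ι → ℤ) : Prop :=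
  ∃ k p, IsPathFree L σ S b k p ∧ p 0 = x ∧ p k = y

/-- `S` is a `σ`-generating set of `L`. -/
def IsGenSetFree (L : AddSubgroup (ι → ℤ)) (σ : Set ι) (S : Set (ι → ℤ)) : Prop :=
  ∀ b x y, inFiberFree L σ b x → inFiberFree L σ b y → ConnFree L σ S b x y

/-- there is a `z`-bounded path from `x` to `y` in `G(F_{L,b},G)`:
all nodes are `≺ z`. -/
def IsBoundedPath (L : AddSubgroup (ι → ℤ)) (G : Set (ι → ℤ)) (b : ι → ℤ)
    (succ : (ι → ℤ) → (ι → ℤ) → Prop) (z x y : ι → ℤ) : Prop :=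
  ∃ k p, IsPathIn L G b k p ∧ p 0 = x ∧ p k = y ∧ ∀ i ≤ k, succ z (p i)

/-- `ē^i = −e^i` as a rational vector. -/
def ebar [DecidableEq ι] (i : ι) : ι → ℚ := fun j => if j = i then -1 else 0

/-- projection deleting the `i`-th coordinate. -/
def projCoord {n : ℕ} (i : Fin (n+1)) : (Fin (n+1) → ℤ) →+ (Fin n → ℤ) where
  toFun x := fun j => x (i.succAbove j)
  map_zero' := rfl
  map_add' _ _ := rfl

/-- projection onto the coordinates outside `σ`. -/
def projSet {n : ℕ} (σ : Finset (Fin n)) :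
    (Fin n → ℤ) →+ ({ i : Fin n // i ∉ σ } → ℤ) where
  toFun x := fun j => x j.1
  map_zero' := rfl
  map_add' _ _ := rfl

end

section Stmt10Aux

variable {n : ℕ}

private lemma adjS_symm' {S : Set (Fin n → ℤ)} {a c : Fin n → ℤ} (h : adjS S a c) :
    adjS S c a := h.elim Or.inr Or.inl

private lemma adjS_add' {S : Set (Fin n → ℤ)} {a c w : Fin n → ℤ} (h : adjS S a c) :
    adjS S (a + w) (c + w) := by
  rcases h with h | h
  · exact Or.inl (by simpa [add_sub_add_right_eq_sub] using h)
  · exact Or.inr (by simpa [add_sub_add_right_eq_sub] using h)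

private lemma adjS_subg {S : Set (Fin n → ℤ)} {a c g : Fin n → ℤ} (h : adjS S a c) :
    adjS S (a - g) (c - g) := by
  simpa [sub_eq_add_neg] using adjS_add' (w := -g) h

private lemma connFree_symm {L : AddSubgroup (Fin n → ℤ)} {σ : Set (Fin n)}
    {S : Set (Fin n → ℤ)} {b x y : Fin n → ℤ} (h : ConnFree L σ S b x y) :
    ConnFree L σ S b y x := by
  obtain ⟨k, p, ⟨hf, ha⟩, h0, hk⟩ := h
  refine ⟨k, fun i => p (k - i), ⟨fun i _ => hf _ (Nat.sub_le _ _), ?_⟩, by simpa, ?_⟩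
  · intro i hi
    have h1 : k - i - 1 < k := by omega
    have h2 : (k - i - 1) + 1 = k - i := by omega
    have h3 : k - (i + 1) = k - i - 1 := by omega
    have := ha (k - i - 1) h1
    rw [h2] at this
    show adjS S (p (k - i)) (p (k - (i + 1)))
    rw [h3]
    exact adjS_symm' this
  · simpa [Nat.sub_self] using h0

private lemma connFree_trans {L : AddSubgroup (Fin n → ℤ)} {σ : Set (Fin n)}
    {S : Set (Fin n → ℤ)} {b x y z : Fin n → ℤ}
    (h1 : ConnFree L σ S b x y) (h2 : ConnFree L σ S b y z) : ConnFree L σ S b x z := by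
  obtain ⟨k, p, ⟨hf, ha⟩, hp0, hpk⟩ := h1
  obtain ⟨l, q, ⟨gf, ga⟩, hq0, hql⟩ := h2
  refine ⟨k + l, fun i => if i < k then p i else q (i - k), ⟨⟨?_, ?_⟩, ?_, ?_⟩⟩
  · intro i _
    by_cases h : i < k
    · simpa [h] using hf i h.le
    · simp only [h, if_false]
      exact gf (i - k) (by omega)
  · intro i hik
    by_cases h : i + 1 < k
    · have hik' : i < k := by omega
      simpa [h, hik'] using ha i hik'
    · by_cases h' : i < k
      · have hk1 : i + 1 = k := by omega
        show adjS S (if i < k then p i else q (i - k))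
          (if i + 1 < k then p (i + 1) else q (i + 1 - k))
        rw [if_pos h', if_neg h]
        have e2 : q (i + 1 - k) = p (i + 1) := by
          rw [show i + 1 - k = 0 by omega, hq0, ← hpk, hk1]
        rw [e2]
        exact ha i h' 
      · have e : i + 1 - k = (i - k) + 1 := by omega
        simp only [h', if_false, h, if_false, e]
        exact ga (i - k) (by omega)
  · by_cases h : 0 < k
    · simpa [h] using hp0
    · have hk0 : k = 0 := by omega
      subst hk0
      show (if 0 < 0 then p 0 else q (0 - 0)) = x
      rw [if_neg (by omega), Nat.sub_self, hq0, ← hpk]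
      exact hp0
  · have h : ¬ (k + l < k) := by omega
    simp only [h, if_false]
    have e : k + l - k = l := by omega
    rw [e]
    exact hql

private lemma path_bound (q : ℕ → Fin n → ℤ) (k : ℕ) :
    ∃ M : ℕ, ∀ j ≤ k, ∀ i, -(M : ℤ) ≤ q j i := by
  refine ⟨(Finset.range (k + 1)).sup fun j => Finset.univ.sup fun i => (q j i).natAbs, ?_⟩
  intro j hj i
  have h1 : (Finset.univ.sup fun i => (q j i).natAbs) ≤
      (Finset.range (k + 1)).sup fun j => Finset.univ.sup fun i => (q j i).natAbs :=
    Finset.le_sup (f := fun j => Finset.univ.sup fun i => (q j i).natAbs)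
      (Finset.mem_range.mpr (Nat.lt_succ_of_le hj))
  have h2 : (q j i).natAbs ≤ Finset.univ.sup fun i => (q j i).natAbs :=
    Finset.le_sup (f := fun i => (q j i).natAbs) (Finset.mem_univ i)
  have := le_trans h2 h1
  omega

private lemma climb {L : AddSubgroup (Fin n → ℤ)} {S : Set (Fin n → ℤ)} {σ : Set (Fin n)}
    {b z v : Fin n → ℤ} (hv : v ∈ S ∨ -v ∈ S) (hvL : v ∈ L)
    (hzb : z - b ∈ L) (hok : ∀ i, i ∉ σ → 0 ≤ z i ∧ 0 ≤ v i) (t : ℕ) :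
    ConnFree L σ S b z (fun i => z i + (t : ℤ) * v i) := by
  refine ⟨t, fun j => fun i => z i + (j : ℤ) * v i, ⟨⟨?_, ?_⟩, by simp, rfl⟩⟩
  · intro j _
    constructor
    · intro i hi
      have h1 := hok i hi
      have h2 : (0 : ℤ) ≤ (j : ℤ) * v i := mul_nonneg (by positivity) h1.2
      have h3 := h1.1
      show 0 ≤ z i + (j : ℤ) * v i
      omega
    · have he : (fun i => z i + (j : ℤ) * v i) - b = (z - b) + (j : ℤ) • v := by
        funext i
        simp [smul_eq_mul]
        ring
      rw [he]
      exact L.add_mem hzb (L.zsmul_mem hvL _)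
  · intro j _
    have hdiff : (fun i => z i + ((j : ℕ) + 1 : ℕ) * v i) - (fun i => z i + (j : ℤ) * v i) = v := by
      funext i
      push_cast
      simp
      ring
    rcases hv with h | h
    · exact Or.inr (by rw [hdiff]; exact h)
    · refine Or.inl ?_
      have : (fun i => z i + ((j : ℕ) : ℤ) * v i) - (fun i => z i + (((j : ℕ) + 1 : ℕ) : ℤ) * v i) = -v := by
        rw [← neg_sub]
        rw [show ((fun i => z i + (((j:ℕ)+1:ℕ) : ℤ) * v i) - fun i => z i + ((j:ℕ) : ℤ) * v i) = v from hdiff]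
      rw [this]
      exact h

private lemma rec_base {L : AddSubgroup (Fin n → ℤ)} {S : Set (Fin n → ℤ)}
    {b x y : Fin n → ℤ} {k : ℕ} {p : ℕ → Fin n → ℤ}
    (hp : IsPathIn L S b k p) (h0 : p 0 = x) (hk : p k = y) (U : Finset (Fin n))
    (hz : ∀ s ∈ S, ∀ i ∈ U, s i = 0) :
    ConnFree L ((↑U : Set (Fin n))ᶜ) S (b - meetOn ↑U x y) (x - meetOn ↑U x y)
      (y - meetOn ↑U x y) := by
  have hconst : ∀ j, j ≤ k → ∀ i ∈ U, p j i = x i := by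
    intro j
    induction j with
    | zero => intro _ i _; rw [h0]
    | succ m ih =>
      intro hm i hi
      have hadj := hp.2 m (by omega)
      have hpm := ih (by omega) i hi
      rcases hadj with h | h
      · have hz' := hz _ h i hi
        simp only [Pi.sub_apply] at hz'
        omega
      · have hz' := hz _ h i hi
        simp only [Pi.sub_apply] at hz'
        omega
  have hyx : ∀ i ∈ U, y i = x i := by
    intro i hi
    rw [← hk]
    exact hconst k le_rfl i hi
  have hγ : ∀ i ∈ U, meetOn (↑U : Set (Fin n)) x y i = x i := by
    intro i hi
    simp only [meetOn, Set.mem_setOf_eq, Finset.coe_sort_coe, Finset.mem_coe, hi, if_pos]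
    rw [hyx i hi, min_self]
  refine ⟨k, fun j => p j - meetOn ↑U x y, ⟨⟨?_, ?_⟩,
    by show p 0 - _ = _; rw [h0], by show p k - _ = _; rw [hk]⟩⟩
  · intro j hj
    constructor
    · intro i hifree
      have hiU : i ∈ U := by simpa using hifree
      simp only [Pi.sub_apply]
      rw [hconst j hj i hiU, hγ i hiU]
      omega
    · have he : p j - meetOn (↑U : Set (Fin n)) x y - (b - meetOn ↑U x y) = p j - b := by
        funext i
        simp only [Pi.sub_apply]
        ring
      rw [he]
      exact (hp.1 j hj).2
  · intro j hj
    exact adjS_subg (hp.2 j hj)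

private lemma mass_convert {L : AddSubgroup (Fin n → ℤ)} {S : Set (Fin n → ℤ)}
    (σf : Finset (Fin n)) {B X Y : Fin n → ℤ}
    (h : ConnFree L (↑σf) S B X Y) :
    ∃ μ : Fin n → ℤ, (∀ i, 0 ≤ μ i) ∧ (∀ i, i ∉ σf → μ i = 0) ∧
      ConnIn L S (B + μ) (X + μ) (Y + μ) := by
  obtain ⟨k, q, ⟨hf, ha⟩, h0, hk⟩ := h
  obtain ⟨M, hM⟩ := path_bound q k
  refine ⟨fun i => if i ∈ σf then (M : ℤ) else 0, ?_, ?_, ?_⟩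
  · intro i; dsimp only; split <;> simp
  · intro i hi; simp [hi]
  · refine ⟨k, fun j => q j + fun i => if i ∈ σf then (M : ℤ) else 0, ⟨⟨?_, ?_⟩, ?_, ?_⟩⟩
    · intro j hj
      constructor
      · intro i
        simp only [Pi.add_apply]
        by_cases hi : i ∈ σf
        · have := hM j hj i
          simp [hi]
          omega
        · have := (hf j hj).1 i (by simpa using hi)
          simp [hi]
          omega
      · have he : (q j + fun i => if i ∈ σf then (M : ℤ) else 0) -
            (B + fun i => if i ∈ σf then (M : ℤ) else 0) = q j - B := by
          funext i
          simp only [Pi.add_apply, Pi.sub_apply]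
          ring
        rw [he]
        exact (hf j hj).2
    · intro j hj
      exact adjS_add' (ha j hj)
    · show q 0 + _ = _
      rw [h0]
    · show q k + _ = _
      rw [hk]

private lemma rec_lem {L : AddSubgroup (Fin n → ℤ)} {S : Set (Fin n → ℤ)}
    (hS : ∀ s ∈ S, s ∈ L) {b x y : Fin n → ℤ} {k : ℕ} {p : ℕ → Fin n → ℤ}
    (hp : IsPathIn L S b k p) (h0 : p 0 = x) (hk : p k = y) :
    ∀ (N : ℕ) (U : Finset (Fin n)), U.card ≤ N →
      ∃ σm σp : Finset (Fin n), σm ⊆ U ∧ σp ⊆ U ∧ Disjoint σm σp ∧ σm.card ≤ σp.card ∧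
        ConnFree L ((↑U : Set (Fin n))ᶜ ∪ ↑σm) S (b - meetOn ↑U x y) (x - meetOn ↑U x y)
          (y - meetOn ↑U x y) := by
  intro N
  induction N with
  | zero =>
    intro U hU
    have hU0 : U = ∅ := Finset.card_eq_zero.mp (Nat.le_zero.mp hU)
    subst hU0
    refine ⟨∅, ∅, Finset.Subset.refl _, Finset.Subset.refl _, by simp, le_rfl, ?_⟩
    have hbase := rec_base hp h0 hk ∅ (by intro s _ i hi; simp at hi)
    have hset : ((↑(∅ : Finset (Fin n)) : Set (Fin n))ᶜ ∪ ↑(∅ : Finset (Fin n)))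
        = ((↑(∅ : Finset (Fin n)) : Set (Fin n))ᶜ) := by simp
    rw [hset]
    exact hbase
  | succ N ih =>
    intro U hU
    by_cases hex : ∃ s ∈ S, ∃ i ∈ U, s i ≠ 0
    · obtain ⟨s, hsS, i0, hi0U, hs0⟩ := hex
      obtain ⟨v, hvS, hvL, hv0, hPB⟩ :
          ∃ v : Fin n → ℤ, (v ∈ S ∨ -v ∈ S) ∧ v ∈ L ∧ v i0 ≠ 0 ∧
            (U.filter fun i => v i < 0).card ≤ (U.filter fun i => 0 < v i).card := by
        rcases le_or_gt (U.filter fun i => s i < 0).card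
            (U.filter fun i => 0 < s i).card with h | h
        · exact ⟨s, Or.inl hsS, hS s hsS, hs0, h⟩
        · refine ⟨-s, Or.inr (by rwa [neg_neg]), L.neg_mem (hS s hsS), by simpa using hs0, ?_⟩
          have e1 : (U.filter fun i => (-s) i < 0) = U.filter fun i => 0 < s i := by
            apply Finset.filter_congr
            intro i _
            simp
          have e2 : (U.filter fun i => 0 < (-s) i) = U.filter fun i => s i < 0 := by
            apply Finset.filter_congr
            intro i _
            simp
          rw [e1, e2]
          exact h.le
      set Pv := U.filter (fun i => 0 < v i) with hPvdef
      set Bv := U.filter (fun i => v i < 0) with hBvdef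
      set U' := U \ (Pv ∪ Bv) with hU'def
      have hU'sub : U' ⊆ U := Finset.sdiff_subset
      have hvU' : ∀ i ∈ U', v i = 0 := by
        intro i hi
        rw [hU'def, Finset.mem_sdiff] at hi
        have h1 : i ∉ Pv ∪ Bv := hi.2
        rw [Finset.mem_union] at h1
        push_neg at h1
        have h2 : ¬ (0 < v i) := fun hc => h1.1 (by
          rw [hPvdef, Finset.mem_filter]; exact ⟨hi.1, hc⟩)
        have h3 : ¬ (v i < 0) := fun hc => h1.2 (by
          rw [hBvdef, Finset.mem_filter]; exact ⟨hi.1, hc⟩)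
        omega
      have hPU' : ∀ i ∈ Pv, i ∉ U' := by
        intro i hi hi'
        rw [hU'def, Finset.mem_sdiff] at hi'
        exact hi'.2 (Finset.mem_union_left _ hi)
      have hBU' : ∀ i ∈ Bv, i ∉ U' := by
        intro i hi hi'
        rw [hU'def, Finset.mem_sdiff] at hi'
        exact hi'.2 (Finset.mem_union_right _ hi)
      have hmemU' : ∀ i, i ∈ U → i ∉ Pv → i ∉ Bv → i ∈ U' := by
        intro i hiU hiP hiB
        rw [hU'def, Finset.mem_sdiff]
        refine ⟨hiU, fun hc => ?_⟩
        rcases Finset.mem_union.mp hc with h | h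
        · exact hiP h
        · exact hiB h
      have hU'card : U'.card ≤ N := by
        have hi0 : i0 ∈ Pv ∪ Bv := by
          rw [Finset.mem_union, hPvdef, hBvdef, Finset.mem_filter, Finset.mem_filter]
          rcases lt_trichotomy (v i0) 0 with h | h | h
          · exact Or.inr ⟨hi0U, h⟩
          · exact absurd h hv0
          · exact Or.inl ⟨hi0U, h⟩
        have hss : U' ⊂ U := by
          rw [Finset.ssubset_iff_of_subset hU'sub]
          refine ⟨i0, hi0U, fun hi' => ?_⟩
          rw [hU'def, Finset.mem_sdiff] at hi'
          exact hi'.2 hi0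
        have := Finset.card_lt_card hss
        omega
      obtain ⟨σm', σp', hmU', hpU', hdisj', hcard', hconn'⟩ := ih U' hU'card
      set γ := meetOn (↑U : Set (Fin n)) x y with hγdef
      set γ' := meetOn (↑U' : Set (Fin n)) x y with hγ'def
      have hγmin : ∀ i ∈ U, γ i = min (x i) (y i) := by
        intro i hi
        rw [hγdef]
        simp [meetOn, hi]
      have hγ'γ : ∀ i ∈ U', γ' i = γ i := by
        intro i hi
        rw [hγ'def, hγdef]
        simp [meetOn, hi, hU'sub hi]
      have hγ'0 : ∀ i, i ∉ U' → γ' i = 0 := by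
        intro i hi
        rw [hγ'def]
        simp [meetOn, hi]
      have hxb : x - b ∈ L := by
        have := (hp.1 0 (Nat.zero_le k)).2
        rwa [h0] at this
      have hyb : y - b ∈ L := by
        have := (hp.1 k le_rfl).2
        rwa [hk] at this
      obtain ⟨k', q, hq, hq0, hqk⟩ := hconn'
      obtain ⟨M, hM⟩ := path_bound q k'
      set G := Finset.univ.sup (fun i => (γ i).natAbs) with hGdef
      have hG : ∀ i, γ i ≤ (G : ℤ) := by
        intro i
        have h1 : (γ i).natAbs ≤ G :=
          Finset.le_sup (f := fun i => (γ i).natAbs) (Finset.mem_univ i)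
        omega
      set t : ℕ := M + G + 1 with htdef
      refine ⟨σm' ∪ Bv, σp' ∪ Pv, ?_, ?_, ?_, ?_, ?_⟩
      · exact Finset.union_subset (hmU'.trans hU'sub) (Finset.filter_subset _ _)
      · exact Finset.union_subset (hpU'.trans hU'sub) (Finset.filter_subset _ _)
      · refine Finset.disjoint_union_left.mpr ⟨Finset.disjoint_union_right.mpr ⟨hdisj', ?_⟩,
          Finset.disjoint_union_right.mpr ⟨?_, ?_⟩⟩
        · exact Finset.disjoint_left.mpr fun {i} hi hip => hPU' i hip (hmU' hi)
        · exact Finset.disjoint_left.mpr fun {i} hi hip => hBU' i hi (hpU' hip)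
        · refine Finset.disjoint_left.mpr fun {i} hi hip => ?_
          rw [hBvdef, Finset.mem_filter] at hi
          rw [hPvdef, Finset.mem_filter] at hip
          omega
      · rw [Finset.card_union_of_disjoint
            (Finset.disjoint_left.mpr fun {i} hi hib => hBU' i hib (hmU' hi)),
          Finset.card_union_of_disjoint
            (Finset.disjoint_left.mpr fun {i} hi hipv => hPU' i hipv (hpU' hi))]
        exact add_le_add hcard' hPB
      · -- the connectivity statement
        have hconstrained : ∀ i : Fin n,
            i ∉ ((↑U : Set (Fin n))ᶜ ∪ ↑(σm' ∪ Bv)) → i ∈ U ∧ i ∉ σm' ∧ i ∉ Bv := by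
          intro i hi
          simp only [Set.mem_union, Set.mem_compl_iff, Finset.coe_union, Finset.mem_coe,
            Finset.mem_union, not_or, not_not] at hi
          exact ⟨hi.1, hi.2.1, hi.2.2⟩
        have hA : ConnFree L ((↑U : Set (Fin n))ᶜ ∪ ↑(σm' ∪ Bv)) S (b - γ) (x - γ)
            (fun i => (x - γ) i + (t : ℤ) * v i) := by
          refine climb hvS hvL ?_ ?_ t
          · have he : (x - γ) - (b - γ) = x - b := by
              funext i
              simp only [Pi.sub_apply]
              ring
            rw [he]
            exact hxb
          · intro i hi
            obtain ⟨hiU, _, hiB⟩ := hconstrained i hi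
            constructor
            · have := hγmin i hiU
              simp only [Pi.sub_apply]
              omega
            · by_contra hc
              push_neg at hc
              exact hiB (by rw [hBvdef, Finset.mem_filter]; exact ⟨hiU, by omega⟩)
        have hC : ConnFree L ((↑U : Set (Fin n))ᶜ ∪ ↑(σm' ∪ Bv)) S (b - γ) (y - γ)
            (fun i => (y - γ) i + (t : ℤ) * v i) := by
          refine climb hvS hvL ?_ ?_ t
          · have he : (y - γ) - (b - γ) = y - b := by
              funext i
              simp only [Pi.sub_apply]
              ring
            rw [he]
            exact hyb
          · intro i hi
            obtain ⟨hiU, _, hiB⟩ := hconstrained i hi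
            constructor
            · have := hγmin i hiU
              simp only [Pi.sub_apply]
              omega
            · by_contra hc
              push_neg at hc
              exact hiB (by rw [hBvdef, Finset.mem_filter]; exact ⟨hiU, by omega⟩)
        have hB : ConnFree L ((↑U : Set (Fin n))ᶜ ∪ ↑(σm' ∪ Bv)) S (b - γ)
            (fun i => (x - γ) i + (t : ℤ) * v i) (fun i => (y - γ) i + (t : ℤ) * v i) := by
          refine ⟨k', fun j => fun i => q j i + ((t : ℤ) * v i + γ' i - γ i), ⟨⟨?_, ?_⟩, ?_, ?_⟩⟩
          · intro j hj
            constructor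
            · intro i hi
              obtain ⟨hiU, him, hiB⟩ := hconstrained i hi
              show 0 ≤ q j i + ((t : ℤ) * v i + γ' i - γ i)
              by_cases hiP : i ∈ Pv
              · have hvpos : 0 < v i := by
                  rw [hPvdef, Finset.mem_filter] at hiP
                  exact hiP.2
                have hγ'i : γ' i = 0 := hγ'0 i (hPU' i hiP)
                have hqlow := hM j hj i
                have hγi := hG i
                have htv : (t : ℤ) ≤ (t : ℤ) * v i :=
                  le_mul_of_one_le_right (by positivity) (by omega)
                have htval : (t : ℤ) = (M : ℤ) + (G : ℤ) + 1 := by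
                  rw [htdef]
                  push_cast
                  ring
                linarith [hqlow, hγ'i, hγi, htv, htval]
              · have hiU' : i ∈ U' := hmemU' i hiU hiP hiB
                have hv0' : v i = 0 := hvU' i hiU'
                have hγeq : γ' i = γ i := hγ'γ i hiU'
                have hqpos : 0 ≤ q j i := by
                  refine (hq.1 j hj).1 i ?_
                  intro hc
                  rcases hc with hc | hc
                  · exact hc (Finset.mem_coe.mpr hiU')
                  · exact him (Finset.mem_coe.mp hc)
                have hz : (t : ℤ) * v i = 0 := by rw [hv0']; ring
                linarith [hqpos, hz, hγeq]
            · have he : (fun i => q j i + ((t : ℤ) * v i + γ' i - γ i)) - (b - γ)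
                  = (q j - (b - γ')) + (t : ℤ) • v := by
                funext i
                simp only [Pi.add_apply, Pi.sub_apply, Pi.smul_apply, smul_eq_mul]
                ring
              rw [he]
              exact L.add_mem (hq.1 j hj).2 (L.zsmul_mem hvL _)
          · intro j hj
            exact adjS_add' (w := fun i => (t : ℤ) * v i + γ' i - γ i) (hq.2 j hj)
          · funext i
            show q 0 i + ((t : ℤ) * v i + γ' i - γ i) = (x - γ) i + (t : ℤ) * v i
            rw [hq0]
            simp only [Pi.sub_apply]
            ring
          · funext i
            show q k' i + ((t : ℤ) * v i + γ' i - γ i) = (y - γ) i + (t : ℤ) * v i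
            rw [hqk]
            simp only [Pi.sub_apply]
            ring
        exact connFree_trans hA (connFree_trans hB (connFree_symm hC))
    · -- base : no element of S touches U
      push_neg at hex
      refine ⟨∅, ∅, Finset.empty_subset _, Finset.empty_subset _, by simp, le_rfl, ?_⟩
      have hbase := rec_base hp h0 hk U hex
      have hset : ((↑U : Set (Fin n))ᶜ ∪ ↑(∅ : Finset (Fin n)))
          = ((↑U : Set (Fin n))ᶜ) := by simp
      rw [hset]
      exact hbase

end Stmt10Aux

/-- for finite `S, T ⊆ L` (with `S` spanning `L`, and `L` not
contained in any coordinate hyperplane) there exists `σ` with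
`|σ| ≤ ⌊n/2⌋` such that `σ`-saturation of `T` on `S` implies
`{1,…,n}`-saturation of `T` on `S`. -/
theorem stmt10 {n : ℕ} (L : AddSubgroup (Fin n → ℤ))
    (S T : Set (Fin n → ℤ)) (hSfin : S.Finite) (hTfin : T.Finite)
    (hS : ∀ s ∈ S, s ∈ L) (hT : ∀ s ∈ T, s ∈ L)
    (hspan : AddSubgroup.closure S = L)
    (hnd : ∀ i : Fin n, ∃ u ∈ L, u i ≠ 0) :
    ∃ σ : Finset (Fin n), σ.card ≤ n / 2 ∧
      (IsSaturatedOn L ↑σ S T → IsSaturatedOn L Set.univ S T) := by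
  classical
  by_cases hsat : IsSaturatedOn L Set.univ S T
  · exact ⟨∅, by simp, fun _ => hsat⟩
  · simp only [IsSaturatedOn] at hsat
    push_neg at hsat
    obtain ⟨b, x, y, hx, hy, hcon, hnc⟩ := hsat
    obtain ⟨k, p, hp, h0, hk⟩ := hcon
    obtain ⟨σm, σp, hmU, hpU, hdisj, hcard, hconnF⟩ :=
      rec_lem hS hp h0 hk (Finset.univ : Finset (Fin n)).card Finset.univ le_rfl
    rw [Finset.coe_univ, Set.compl_univ, Set.empty_union] at hconnF
    obtain ⟨μ, hμ0, hμsupp, hConn⟩ := mass_convert σm hconnF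
    set γ := meetOn Set.univ x y with hγdef
    have hγi : ∀ i, γ i = min (x i) (y i) := by
      intro i
      rw [hγdef]
      simp [meetOn]
    refine ⟨σm, ?_, ?_⟩
    · have h1 : (σm ∪ σp).card ≤ n := by
        have := Finset.card_le_card (Finset.subset_univ (σm ∪ σp))
        simpa using this
      rw [Finset.card_union_of_disjoint hdisj] at h1
      exact (Nat.le_div_iff_mul_le (by norm_num)).mpr (by omega)
    · intro hsat'
      exfalso
      have hfib1 : inFiber L (b - γ + μ) (x - γ + μ) := by
        constructor
        · intro i
          have h1 := hγi i
          have h2 := hμ0 i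
          simp only [Pi.add_apply, Pi.sub_apply]
          omega
        · have e : x - γ + μ - (b - γ + μ) = x - b := by
            funext i
            simp only [Pi.add_apply, Pi.sub_apply]
            ring
          rw [e]
          exact hx.2
      have hfib2 : inFiber L (b - γ + μ) (y - γ + μ) := by
        constructor
        · intro i
          have h1 := hγi i
          have h2 := hμ0 i
          simp only [Pi.add_apply, Pi.sub_apply]
          omega
        · have e : y - γ + μ - (b - γ + μ) = y - b := by
            funext i
            simp only [Pi.add_apply, Pi.sub_apply]
            ring
          rw [e]
          exact hy.2
      have happ := hsat' (b - γ + μ) (x - γ + μ) (y - γ + μ) hfib1 hfib2 hConn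
      have hμ' : meetOn (↑σm) (x - γ + μ) (y - γ + μ) = μ := by
        funext i
        by_cases hi : i ∈ σm
        · have hmem : i ∈ (↑σm : Set (Fin n)) := Finset.mem_coe.mpr hi
          simp only [meetOn, hmem, if_true]
          simp only [Pi.add_apply, Pi.sub_apply]
          have := hγi i
          omega
        · have hmem : i ∉ (↑σm : Set (Fin n)) := fun hc => hi (Finset.mem_coe.mp hc)
          simp only [meetOn, hmem, if_false]
          exact (hμsupp i hi).symm
      rw [hμ'] at happ
      have e1 : b - γ + μ - μ = b - γ := by
        funext i
        simp only [Pi.add_apply, Pi.sub_apply]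
        ring
      have e2 : x - γ + μ - μ = x - γ := by
        funext i
        simp only [Pi.add_apply, Pi.sub_apply]
        ring
      have e3 : y - γ + μ - μ = y - γ := by
        funext i
        simp only [Pi.add_apply, Pi.sub_apply]
        ring
      rw [e1, e2, e3] at happ
      exact hnc happ
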